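/- Let $H$ be a real Hilbert space, $S: H \to H'$ a bounded linear operator whose associated bilinear form is symmetric and coercive: $\langle Su, u \rangle \geq \alpha\|u\|^2$ for some $\alpha > 0$. Let $X$ be a reflexive Banach space, $T: X \to H$ a bounded linear map, and $A: X \to X'$ an operator satisfying $\langle Au - Av, u - v \rangle \geq \alpha_G\|u - v\|_X^p$ ($p \geq 2$). Then the operator $B: X \times H \to (X \times H)'$ defined by $\langle B(u,v), (\bar u, \bar v) \rangle = \langle Au, \bar u \rangle + \langle S(Tu + v), T\bar u + \bar v \rangle$ is uniformly monotone on bounded sets: for every $C > 0$ there is $\alpha(C) > 0$ with $\langle B(u,v) - B(\hat u, \hat v), (u - \hat u, v - \hat v) \rangle \geq \alpha(C)(\|u - \hat u\|_X^p + \|v - \hat v\|_H^p)$ whenever $\|(u,v)\|, \|(\hat u, \hat v)\| \leq C$. -/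
import Mathlib

/-- Elementary: `(a+b)^p ≤ 2^p (a^p + b^p)` for nonnegative reals and `p ≥ 0`. -/
lemma aux_add_rpow_le (a b p : ℝ) (ha : 0 ≤ a) (hb : 0 ≤ b) (hp : 0 ≤ p) :
    (a + b) ^ p ≤ 2 ^ p * (a ^ p + b ^ p) := by
  have hmax : a + b ≤ 2 * max a b := by
    rcases le_total a b with h | h
    · simp [max_eq_right h]; linarith
    · simp [max_eq_left h]; linarith
  have h1 : (a + b) ^ p ≤ (2 * max a b) ^ p :=
    Real.rpow_le_rpow (by positivity) hmax hp
  have h2 : (2 * max a b) ^ p = 2 ^ p * (max a b) ^ p :=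
    Real.mul_rpow (by norm_num) (le_max_of_le_left ha)
  have h3 : (max a b) ^ p ≤ a ^ p + b ^ p := by
    rcases le_total a b with h | h
    · rw [max_eq_right h]; nlinarith [Real.rpow_nonneg ha p]
    · rw [max_eq_left h]; nlinarith [Real.rpow_nonneg hb p]
  calc (a + b) ^ p ≤ 2 ^ p * (max a b) ^ p := by rw [← h2]; exact h1
    _ ≤ 2 ^ p * (a ^ p + b ^ p) := by
        have : (0:ℝ) < 2 ^ p := Real.rpow_pos_of_pos (by norm_num) p
        nlinarith

/-- `x^p ≤ M^(p-2) * x^2` when `0 ≤ x ≤ M` and `p ≥ 2`. -/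
lemma aux_rpow_le_sq (x M p : ℝ) (hx : 0 ≤ x) (hxM : x ≤ M) (hM : 0 < M) (hp : 2 ≤ p) :
    x ^ p ≤ M ^ (p - 2) * x ^ 2 := by
  rcases eq_or_lt_of_le hx with h | h
  · rw [← h, Real.zero_rpow (by linarith : p ≠ 0)]
    positivity
  · have hsplit : x ^ p = x ^ (p - 2) * x ^ 2 := by
      rw [← Real.rpow_two, ← Real.rpow_add h, sub_add_cancel]
    rw [hsplit]
    have : x ^ (p - 2) ≤ M ^ (p - 2) := Real.rpow_le_rpow hx hxM (by linarith)
    nlinarith [sq_nonneg x]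

set_option maxHeartbeats 1000000 in
/-- Abstract version of Lemma 4.1: the coupled operator
`B(u,v) = (Au + T'S(Tu+v), S(Tu+v))` built from a uniformly monotone operator `A` on a
Banach space `X` and a symmetric coercive form `S` on a Hilbert space `H` is uniformly
monotone on bounded sets, with respect to `‖·‖_X^p + ‖·‖_H^p`. -/
theorem coupled_operator_uniformly_monotone_on_bounded_sets
    (X H : Type*) [NormedAddCommGroup X] [NormedSpace ℝ X] [CompleteSpace X]
    [NormedAddCommGroup H] [InnerProductSpace ℝ H] [CompleteSpace H]
    (p : ℝ) (hp : 2 ≤ p)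
    (S : H →L[ℝ] H →L[ℝ] ℝ) (hSsymm : ∀ u v : H, S u v = S v u)
    (α : ℝ) (hα : 0 < α) (hScoer : ∀ u : H, α * ‖u‖ ^ 2 ≤ S u u)
    (T : X →L[ℝ] H)
    (A : X → X →L[ℝ] ℝ) (αG : ℝ) (hαG : 0 < αG)
    (hA : ∀ u v : X, αG * ‖u - v‖ ^ p ≤ (A u - A v) (u - v)) :
    ∀ C > 0, ∃ β > 0, ∀ (u uh : X) (v vh : H),
      ‖u‖ ≤ C → ‖v‖ ≤ C → ‖uh‖ ≤ C → ‖vh‖ ≤ C →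
      β * (‖u - uh‖ ^ p + ‖v - vh‖ ^ p) ≤
        (A u - A uh) (u - uh) + S (T (u - uh) + (v - vh)) (T (u - uh) + (v - vh)) := by
  intro C hC
  have hp0 : (0:ℝ) < p := by linarith
  set Tn := ‖T‖ with hTn
  have hTn0 : (0:ℝ) ≤ Tn := norm_nonneg _
  set M : ℝ := 2 * C * (Tn + 1) with hMdef
  have hM0 : 0 < M := by positivity
  have h2p : (0:ℝ) < 2 ^ p := Real.rpow_pos_of_pos (by norm_num) p
  have hMp : (0:ℝ) < M ^ (p - 2) := Real.rpow_pos_of_pos hM0 _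
  set c1 : ℝ := (1 + 2 ^ p * Tn ^ p) / αG with hc1def
  set c2 : ℝ := 2 ^ p * M ^ (p - 2) / α with hc2def
  have hTnp : (0:ℝ) ≤ Tn ^ p := Real.rpow_nonneg hTn0 p
  have hc1 : 0 < c1 := by
    apply div_pos _ hαG; nlinarith
  have hc2 : 0 < c2 := by positivity
  set K : ℝ := max c1 c2 with hKdef
  have hK : 0 < K := lt_of_lt_of_le hc1 (le_max_left _ _)
  refine ⟨K⁻¹, by positivity, ?_⟩
  intro u uh v vh hu hv huh hvh
  set du := u - uh with hdu
  set dv := v - vh with hdv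
  set w := T du + dv with hw
  set D := (A u - A uh) du with hD
  -- basic bounds
  have hdu2C : ‖du‖ ≤ 2 * C := by
    calc ‖du‖ ≤ ‖u‖ + ‖uh‖ := norm_sub_le _ _
      _ ≤ 2 * C := by linarith
  have hdv2C : ‖dv‖ ≤ 2 * C := by
    calc ‖dv‖ ≤ ‖v‖ + ‖vh‖ := norm_sub_le _ _
      _ ≤ 2 * C := by linarith
  have hwM : ‖w‖ ≤ M := by
    have h1 : ‖T du‖ ≤ Tn * ‖du‖ := T.le_opNorm du
    calc ‖w‖ ≤ ‖T du‖ + ‖dv‖ := norm_add_le _ _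
      _ ≤ Tn * ‖du‖ + ‖dv‖ := by linarith
      _ ≤ Tn * (2 * C) + 2 * C := by nlinarith
      _ = M := by rw [hMdef]; ring
  -- monotonicity of A
  have hDlb : αG * ‖du‖ ^ p ≤ D := hA u uh
  have hD0 : 0 ≤ D := le_trans (by positivity) hDlb
  -- coercivity of S
  have hSlb : α * ‖w‖ ^ 2 ≤ S w w := hScoer w
  have hS0 : 0 ≤ S w w := le_trans (by positivity) hSlb
  -- w-power bound
  have hwp2 : ‖w‖ ^ p ≤ M ^ (p - 2) * ‖w‖ ^ 2 :=
    aux_rpow_le_sq ‖w‖ M p (norm_nonneg _) hwM hM0 hp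
  have hwS : ‖w‖ ^ p ≤ M ^ (p - 2) / α * S w w := by
    rw [div_mul_eq_mul_div, le_div_iff₀ hα]
    calc ‖w‖ ^ p * α ≤ M ^ (p - 2) * ‖w‖ ^ 2 * α := by nlinarith
      _ = M ^ (p - 2) * (α * ‖w‖ ^ 2) := by ring
      _ ≤ M ^ (p - 2) * S w w := by nlinarith
  -- du-power bound
  have hduD : ‖du‖ ^ p ≤ (1 / αG) * D := by
    rw [one_div, inv_mul_eq_div, le_div_iff₀ hαG]
    linarith [hDlb]
  -- dv-power bound
  have hdvle : ‖dv‖ ≤ ‖w‖ + Tn * ‖du‖ := by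
    have h1 : dv = w - T du := by rw [hw]; abel
    have h2 : ‖T du‖ ≤ Tn * ‖du‖ := T.le_opNorm du
    calc ‖dv‖ = ‖w - T du‖ := by rw [h1]
      _ ≤ ‖w‖ + ‖T du‖ := norm_sub_le w (T du)
      _ ≤ ‖w‖ + Tn * ‖du‖ := by linarith
  have hdvp : ‖dv‖ ^ p ≤ 2 ^ p * (‖w‖ ^ p + Tn ^ p * ‖du‖ ^ p) := by
    have h1 : ‖dv‖ ^ p ≤ (‖w‖ + Tn * ‖du‖) ^ p :=
      Real.rpow_le_rpow (norm_nonneg _) hdvle hp0.le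
    have h2 : (‖w‖ + Tn * ‖du‖) ^ p ≤ 2 ^ p * (‖w‖ ^ p + (Tn * ‖du‖) ^ p) :=
      aux_add_rpow_le _ _ p (norm_nonneg _) (by positivity) hp0.le
    have h3 : (Tn * ‖du‖) ^ p = Tn ^ p * ‖du‖ ^ p :=
      Real.mul_rpow hTn0 (norm_nonneg _)
    rw [h3] at h2
    linarith
  -- combine
  have hdup0 : 0 ≤ ‖du‖ ^ p := Real.rpow_nonneg (norm_nonneg _) p
  have hcombine : ‖du‖ ^ p + ‖dv‖ ^ p ≤ c1 * D + c2 * S w w := by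
    have : ‖du‖ ^ p + ‖dv‖ ^ p ≤ (1 + 2 ^ p * Tn ^ p) * ‖du‖ ^ p + 2 ^ p * ‖w‖ ^ p := by
      nlinarith
    calc ‖du‖ ^ p + ‖dv‖ ^ p
        ≤ (1 + 2 ^ p * Tn ^ p) * ‖du‖ ^ p + 2 ^ p * ‖w‖ ^ p := this
      _ ≤ (1 + 2 ^ p * Tn ^ p) * ((1 / αG) * D) + 2 ^ p * (M ^ (p - 2) / α * S w w) := by
          have hpos : (0:ℝ) < 1 + 2 ^ p * Tn ^ p := by nlinarith
          nlinarith
      _ = c1 * D + c2 * S w w := by rw [hc1def, hc2def]; ring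
  have hfinal : ‖du‖ ^ p + ‖dv‖ ^ p ≤ K * (D + S w w) := by
    have h1 : c1 * D ≤ K * D := by
      have := le_max_left c1 c2; nlinarith
    have h2 : c2 * S w w ≤ K * S w w := by
      have := le_max_right c1 c2; nlinarith
    calc ‖du‖ ^ p + ‖dv‖ ^ p ≤ c1 * D + c2 * S w w := hcombine
      _ ≤ K * D + K * S w w := by linarith
      _ = K * (D + S w w) := by ring
  calc K⁻¹ * (‖du‖ ^ p + ‖dv‖ ^ p) ≤ K⁻¹ * (K * (D + S w w)) := by
        apply mul_le_mul_of_nonneg_left hfinal (by positivity)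
    _ = D + S w w := by field_simp
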